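/- For every natural number n, f₂ᵗ(n) ≠ 0 if and only if there exist j < 8 and a prime p with p+2 prime such that 64n+8j+1 ≤ p and p+2 ≤ 64n+8j+8; i.e., the twin-prime 2-pattern is nonzero exactly when some sub-block of 8 consecutive integers inside {64n+1, …, 64n+64} contains a twin prime pair. -/

import Mathlib

/-- Level-1 pattern: binary encoding of primality of the block {8n+1, …, 8n+8}. -/
def f1 (n : ℕ) : ℕ := ∑ j ∈ Finset.range 8, if Nat.Prime (8 * n + 1 + j) then 2 ^ (7 - j) else 0

/-- Twin-prime level-2 pattern: encodes which sub-blocks of 8 consecutive integers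
inside a block of 64 consecutive integers carry a twin-prime 1-pattern. -/
def f2t (n : ℕ) : ℕ :=
  ∑ j ∈ Finset.range 8,
    if f1 (8 * n + j) ∈ ({10, 40, 106, 138, 160, 162} : Finset ℕ) then 2 ^ (7 - j) else 0

/-!
For `m > 0` the even numbers among `8m+1, …, 8m+8` are composite, so `f1 m` only records the
primality of `8m+1, 8m+3, 8m+5, 8m+7`, in the bits `128, 32, 8, 2`. One of three consecutive odd
numbers is divisible by `3`, so beyond `3` they are never all prime; under that constraint the six
codes `10, 40, 106, 138, 160, 162` are exactly the patterns with two adjacent odd primes, i.e. a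
twin prime pair. The block `m = 0` has code `106` and contains `(3, 5)`. Finally `f2t n` is a sum
of positive weights over the eight sub-blocks, so it vanishes iff no sub-block has a twin code.
-/

open Finset

lemma Finset.sum_ite_ne_zero_iff {ι : Type*} {s : Finset ι} {p : ι → Prop} [DecidablePred p]
    {w : ι → ℕ} (hw : ∀ i ∈ s, w i ≠ 0) :
    (∑ i ∈ s, if p i then w i else 0) ≠ 0 ↔ ∃ i ∈ s, p i := by
  rw [Ne, sum_eq_zero_iff]
  push Not
  exact exists_congr fun i => and_congr_right fun hi => by simp [hw i hi]

theorem Nat.Prime.eq_three_of_prime_add_two_of_prime_add_four {q : ℕ} (hq : q.Prime)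
    (hq2 : (q + 2).Prime) (hq4 : (q + 4).Prime) : q = 3 := by
  have eq_three : ∀ r : ℕ, r.Prime → 3 ∣ r → r = 3 := fun r hr hd =>
    ((Nat.prime_dvd_prime_iff_eq Nat.prime_three hr).mp hd).symm
  rcases (by omega : 3 ∣ q ∨ 3 ∣ q + 2 ∨ 3 ∣ q + 4) with h | h | h
  · exact eq_three q hq h
  · obtain rfl : q = 1 := by have := eq_three _ hq2 h; omega
    exact absurd hq Nat.not_prime_one
  · have := eq_three _ hq4 h; omega

lemma twin_code_mem_iff {a b c d : Prop} [Decidable a] [Decidable b] [Decidable c] [Decidable d]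
    (habc : ¬(a ∧ b ∧ c)) (hbcd : ¬(b ∧ c ∧ d)) :
    (if a then 128 else 0) + (if b then 32 else 0) + (if c then 8 else 0) + (if d then 2 else 0)
        ∈ ({10, 40, 106, 138, 160, 162} : Finset ℕ) ↔
      (a ∧ b) ∨ (b ∧ c) ∨ (c ∧ d) := by
  by_cases a <;> by_cases b <;> by_cases c <;> by_cases d <;> simp_all

lemma f1_eq_of_pos {m : ℕ} (hm : 0 < m) :
    f1 m = (if (8 * m + 1).Prime then 128 else 0) + (if (8 * m + 3).Prime then 32 else 0) +
      (if (8 * m + 5).Prime then 8 else 0) + (if (8 * m + 7).Prime then 2 else 0) := by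
  have not_prime : ∀ j, j % 2 = 1 → ¬(8 * m + 1 + j).Prime := fun j hj h => by
    have := h.eq_two_or_odd; omega
  simp only [f1, sum_range_succ, sum_range_zero, not_prime 1 rfl, not_prime 3 rfl,
    not_prime 5 rfl, not_prime 7 rfl, if_false, Nat.add_assoc, Nat.reduceAdd, Nat.reduceSub,
    Nat.reducePow, zero_add, add_zero]

lemma exists_twin_prime_in_block_iff {m : ℕ} (hm : 0 < m) :
    (∃ p, p.Prime ∧ (p + 2).Prime ∧ 8 * m + 1 ≤ p ∧ p + 2 ≤ 8 * m + 8) ↔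
      ((8 * m + 1).Prime ∧ (8 * m + 3).Prime) ∨ ((8 * m + 3).Prime ∧ (8 * m + 5).Prime) ∨
        ((8 * m + 5).Prime ∧ (8 * m + 7).Prime) := by
  constructor
  · rintro ⟨p, hp, hp2, hlo, hhi⟩
    have := hp.eq_two_or_odd
    obtain rfl | rfl | rfl : p = 8 * m + 1 ∨ p = 8 * m + 3 ∨ p = 8 * m + 5 := by omega
    exacts [.inl ⟨hp, hp2⟩, .inr (.inl ⟨hp, hp2⟩), .inr (.inr ⟨hp, hp2⟩)]
  · rintro (⟨hp, hp2⟩ | ⟨hp, hp2⟩ | ⟨hp, hp2⟩)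
    exacts [⟨_, hp, hp2, by omega, by omega⟩, ⟨_, hp, hp2, by omega, by omega⟩,
      ⟨_, hp, hp2, by omega, by omega⟩]

lemma f1_mem_iff_exists_twin_prime (m : ℕ) :
    f1 m ∈ ({10, 40, 106, 138, 160, 162} : Finset ℕ) ↔
      ∃ p, p.Prime ∧ (p + 2).Prime ∧ 8 * m + 1 ≤ p ∧ p + 2 ≤ 8 * m + 8 := by
  rcases Nat.eq_zero_or_pos m with rfl | hm
  · exact iff_of_true (by decide) ⟨3, by norm_num⟩
  have no_triple : ∀ q, 8 * m + 1 ≤ q → ¬(q.Prime ∧ (q + 2).Prime ∧ (q + 4).Prime) :=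
    fun q hq ⟨h, h2, h4⟩ => by have := h.eq_three_of_prime_add_two_of_prime_add_four h2 h4; omega
  rw [f1_eq_of_pos hm, twin_code_mem_iff (no_triple _ le_rfl) (no_triple (8 * m + 3) (by omega)),
    exists_twin_prime_in_block_iff hm]

theorem f2t_ne_zero_iff (n : ℕ) :
    f2t n ≠ 0 ↔
      ∃ j < 8, ∃ p : ℕ, Nat.Prime p ∧ Nat.Prime (p + 2) ∧
        64 * n + 8 * j + 1 ≤ p ∧ p + 2 ≤ 64 * n + 8 * j + 8 := by
  rw [f2t, sum_ite_ne_zero_iff fun _ _ => by positivity]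
  simp only [mem_range, f1_mem_iff_exists_twin_prime]
  refine exists_congr fun j => and_congr_right fun _ => ?_
  rw [show 8 * (8 * n + j) = 64 * n + 8 * j by ring]
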